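/- arXiv:2404.04336 — 4 statements merged into one kernel-verified Lean document; each statement's English description precedes it below -/
import Mathlib

section
/- Let r > 0 and let G : ℂ → ℂ be holomorphic on the punctured disc B(0, r) \ {0}. If the weighted square integral ∫_{B(0,r)\{0}} |G(ζ)|²·|ζ|² dA(ζ) is finite, then G has at most a simple pole at the origin: there exist A ∈ ℂ and a function h : ℂ → ℂ holomorphic on the full disc B(0, r) such that G(ζ) = A/ζ + h(ζ) for all ζ ∈ B(0, r) \ {0}. -/
/-!
Put `u ζ = ζ * G ζ`, so that `u` is holomorphic and square integrable on the punctured disc.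
Averaging the mean value property over circles gives `u c = ⨍ w in ball c ρ, u w`, hence by Jensen
`π ρ² ‖u c‖² ≤ ∫ w in ball c ρ, ‖u w‖²`. Taking `c = z`, `ρ = ‖z‖ / 2` (a disc inside the punctured
disc whose area tends to `0` with `z`), absolute continuity of the integral yields `z • u z → 0`,
which is `u = o(1/z)`: Riemann's removable singularity theorem extends `u` to a function `U`
holomorphic on the whole disc, and `G ζ = U 0 / ζ + dslope U 0 ζ`.
-/

open MeasureTheory Complex Metric Set Real Filter Topology Asymptotics

section
variable {E : Type*} [NormedAddCommGroup E] [NormedSpace ℝ E]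

lemma circleAverage_eq_setIntegral_Ioo (f : ℂ → E) (c : ℂ) (R : ℝ) :
    circleAverage f c R = (2 * π)⁻¹ • ∫ θ in Ioo (-π) π, f (circleMap c R θ) := by
  rw [circleAverage_eq_integral_add (-π), intervalIntegral.integral_comp_add_right
    (fun θ => f (circleMap c R θ)), zero_add, show 2 * π + -π = π by ring,
    intervalIntegral.integral_of_le (by linarith [pi_pos]), integral_Ioc_eq_integral_Ioo]

lemma add_polarCoord_symm (c : ℂ) (p : ℝ × ℝ) :
    c + Complex.polarCoord.symm p = circleMap c p.1 p.2 := by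
  simp [Complex.polarCoord_symm_apply, circleMap, Complex.exp_mul_I]

theorem integral_ball_eq_intervalIntegral_circleAverage {f : ℂ → E} {c : ℂ} {R : ℝ} (hR : 0 ≤ R)
    (hf : ContinuousOn f (closedBall c R)) :
    ∫ w in ball c R, f w = (2 * π) • ∫ s in 0..R, s • circleAverage f c s := by
  set S : Set (ℝ × ℝ) := Ioo 0 R ×ˢ Ioo (-π) π
  set g : ℝ × ℝ → E := fun p => p.1 • f (circleMap c p.1 p.2)
  have hS : S ⊆ Complex.polarCoord.target := by
    rw [Complex.polarCoord_target]
    exact prod_mono Ioo_subset_Ioi_self subset_rfl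
  have hg : IntegrableOn g S (volume.prod volume) := by
    refine (ContinuousOn.integrableOn_compact (isCompact_Icc.prod isCompact_Icc) ?_).mono_set
      (prod_mono Ioo_subset_Icc_self Ioo_subset_Icc_self)
    refine continuousOn_fst.smul (hf.comp (by fun_prop) fun p hp => ?_)
    simpa [dist_eq_norm, abs_of_nonneg hp.1.1] using hp.1.2
  have hpolar : ∀ p ∈ Complex.polarCoord.target,
      p.1 • (ball c R).indicator f (c + Complex.polarCoord.symm p) = S.indicator g p := by
    rintro ⟨s, θ⟩ ⟨hs, hθ⟩
    have hs : 0 < s := hs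
    rw [add_polarCoord_symm]
    by_cases hsR : s < R
    · have : circleMap c s θ ∈ ball c R := by simpa [dist_eq_norm, abs_of_pos hs] using hsR
      simp [S, g, this, hs, hsR, hθ]
    · have : circleMap c s θ ∉ ball c R := by simpa [dist_eq_norm, abs_of_pos hs] using hsR
      simp [S, g, this, hsR]
  calc ∫ w in ball c R, f w = ∫ w, (ball c R).indicator f (c + w) := by
        rw [integral_add_left_eq_self, integral_indicator measurableSet_ball]
    _ = ∫ p in Complex.polarCoord.target, S.indicator g p := by
        rw [← Complex.integral_comp_polarCoord_symm]
        exact setIntegral_congr_fun Complex.polarCoord.open_target.measurableSet hpolar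
    _ = ∫ s in Ioo 0 R, ∫ θ in Ioo (-π) π, s • f (circleMap c s θ) := by
        rw [setIntegral_indicator (measurableSet_Ioo.prod measurableSet_Ioo),
          inter_eq_self_of_subset_right hS, Measure.volume_eq_prod]
        exact setIntegral_prod g hg
    _ = ∫ s in Ioo 0 R, (2 * π) • s • circleAverage f c s := by
        refine setIntegral_congr_fun measurableSet_Ioo fun s _ => ?_
        rw [circleAverage_eq_setIntegral_Ioo, smul_comm, smul_inv_smul₀ two_pi_pos.ne',
          integral_smul]
    _ = (2 * π) • ∫ s in 0..R, s • circleAverage f c s := by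
        rw [intervalIntegral.integral_of_le hR, integral_Ioc_eq_integral_Ioo, integral_smul]

end

lemma closedBall_half_norm_subset_ball_diff_zero {F : Type*} [NormedAddCommGroup F] {z : F}
    {r : ℝ} (hz : z ≠ 0) (hzr : 3 * ‖z‖ < 2 * r) :
    closedBall z (‖z‖ / 2) ⊆ ball 0 r \ {0} := by
  intro w hw
  rw [mem_closedBall, dist_eq_norm] at hw
  have hz_pos : 0 < ‖z‖ := norm_pos_iff.mpr hz
  have hw_le : ‖w‖ ≤ ‖w - z‖ + ‖z‖ := norm_le_norm_sub_add w z
  refine ⟨mem_ball_zero_iff.mpr (by linarith), ?_⟩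
  rintro rfl
  rw [zero_sub, norm_neg] at hw
  linarith

section
variable {E : Type*} [NormedAddCommGroup E] [NormedSpace ℂ E] [CompleteSpace E] {f : ℂ → E}
  {c : ℂ} {R : ℝ}

theorem DiffContOnCl.integral_ball (hf : DiffContOnCl ℂ f (ball c R)) (hR : 0 < R) :
    ∫ w in ball c R, f w = (π * R ^ 2) • f c := by
  have hcont : ContinuousOn f (closedBall c R) := closure_ball c hR.ne' ▸ hf.continuousOn
  have hmean : EqOn (fun s : ℝ => s • Real.circleAverage f c s) (fun s => s • f c) (uIcc 0 R) := by
    intro s hs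
    rw [uIcc_of_le hR.le] at hs
    dsimp only
    rw [(hf.mono (ball_subset_ball (abs_le.mpr ⟨by linarith [hs.1], hs.2⟩))).circleAverage]
  rw [integral_ball_eq_intervalIntegral_circleAverage hR.le hcont,
    intervalIntegral.integral_congr hmean, intervalIntegral.integral_smul_const, integral_id,
    smul_smul]
  congr 1
  ring

theorem DiffContOnCl.mul_norm_sq_le_integral_ball (hf : DiffContOnCl ℂ f (ball c R))
    (hR : 0 < R) : π * R ^ 2 * ‖f c‖ ^ 2 ≤ ∫ w in ball c R, ‖f w‖ ^ 2 := by
  have hcont : ContinuousOn f (closedBall c R) := closure_ball c hR.ne' ▸ hf.continuousOn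
  have hvol : volume.real (ball c R) = π * R ^ 2 := by
    simp [measureReal_def, ENNReal.toReal_ofReal hR.le, mul_comm]
  have hvol_pos : 0 < π * R ^ 2 := by positivity
  have hint : IntegrableOn f (ball c R) :=
    (hcont.integrableOn_compact (isCompact_closedBall c R)).mono_set ball_subset_closedBall
  have hint_sq : IntegrableOn (fun w => ‖f w‖ ^ 2) (ball c R) :=
    ((hcont.norm.pow 2).integrableOn_compact (isCompact_closedBall c R)).mono_set
      ball_subset_closedBall
  have havg : ⨍ w in ball c R, f w = f c := by
    rw [setAverage_eq, hvol, hf.integral_ball hR, inv_smul_smul₀ hvol_pos.ne']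
  have hjensen := (convexOn_univ_norm.pow (fun _ _ => norm_nonneg _) 2).map_set_average_le
    (continuous_norm.pow 2).continuousOn isClosed_univ
    (by simp [hR, NNReal.pi_pos.ne']) measure_ball_lt_top.ne
    (ae_of_all _ fun _ => mem_univ _) hint hint_sq
  rw [havg, setAverage_eq, hvol, smul_eq_mul] at hjensen
  exact (le_inv_mul_iff₀ hvol_pos).mp hjensen

theorem differentiableOn_update_limUnder_of_tendsto_sub_smul {u : ℂ → E} {s : Set ℂ}
    (hs : s ∈ 𝓝 c) (hd : DifferentiableOn ℂ u (s \ {c}))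
    (hlim : Tendsto (fun z => (z - c) • u z) (𝓝[≠] c) (𝓝 0)) :
    DifferentiableOn ℂ (Function.update u c (limUnder (𝓝[≠] c) u)) s := by
  refine differentiableOn_update_limUnder_of_isLittleO hs hd ?_
  have hconst : Tendsto (fun z => (z - c) • u c) (𝓝[≠] c) (𝓝 0) :=
    (((continuous_sub_right c).smul continuous_const).tendsto' c 0 (by simp)).mono_left
      nhdsWithin_le_nhds
  have hv : Tendsto (fun z => (z - c) • (u z - u c)) (𝓝[≠] c) (𝓝 0) := by
    simpa [smul_sub] using hlim.sub hconst
  refine ((isBigO_refl (fun z => (z - c)⁻¹) _).smul_isLittleO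
    ((isLittleO_one_iff ℂ).mpr hv)).congr' ?_ (by simp)
  filter_upwards [self_mem_nhdsWithin] with z hz
  exact inv_smul_smul₀ (sub_ne_zero.mpr hz) _

theorem tendsto_smul_of_integrableOn_norm_sq {u : ℂ → E} {r : ℝ} (hr : 0 < r)
    (hu : DifferentiableOn ℂ u (ball 0 r \ {0}))
    (hL2 : IntegrableOn (fun w => ‖u w‖ ^ 2) (ball 0 r \ {0})) :
    Tendsto (fun z => z • u z) (𝓝[≠] 0) (𝓝 0) := by
  set D := ball (0 : ℂ) r \ {0}
  have hnear : ∀ᶠ z in 𝓝[≠] (0 : ℂ), closedBall z (‖z‖ / 2) ⊆ D := by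
    filter_upwards [nhdsWithin_le_nhds (ball_mem_nhds (0 : ℂ) (by positivity : 0 < 2 * r / 3)),
      self_mem_nhdsWithin] with z hzr hz0
    refine closedBall_half_norm_subset_ball_diff_zero hz0 ?_
    linarith [mem_ball_zero_iff.mp hzr]
  have hbound : ∀ᶠ z in 𝓝[≠] (0 : ℂ),
      ‖z • u z‖ ^ 2 ≤ 4 / π * ∫ w in ball z (‖z‖ / 2), ‖u w‖ ^ 2 ∂volume.restrict D := by
    filter_upwards [hnear, self_mem_nhdsWithin] with z hzD hz0
    have hmean := (hu.diffContOnCl_ball hzD).mul_norm_sq_le_integral_ball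
      (half_pos (norm_pos_iff.mpr hz0))
    rw [Measure.restrict_restrict measurableSet_ball,
      inter_eq_self_of_subset_left (ball_subset_closedBall.trans hzD)]
    calc ‖z • u z‖ ^ 2 = 4 / π * (π * (‖z‖ / 2) ^ 2 * ‖u z‖ ^ 2) := by
          rw [norm_smul]; field_simp; ring
      _ ≤ _ := by gcongr
  have hvol : Tendsto (fun z => volume.restrict D (ball z (‖z‖ / 2))) (𝓝[≠] 0) (𝓝 0) := by
    have hcont : Continuous fun z : ℂ => ENNReal.ofReal (‖z‖ / 2) ^ 2 * NNReal.pi :=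
      (ENNReal.continuous_mul_const ENNReal.coe_ne_top).comp
        ((ENNReal.continuous_pow 2).comp (ENNReal.continuous_ofReal.comp (by fun_prop)))
    refine tendsto_of_tendsto_of_tendsto_of_le_of_le tendsto_const_nhds
      ((hcont.tendsto' 0 0 (by simp)).mono_left nhdsWithin_le_nhds) (fun _ => zero_le)
      fun z => ?_
    exact (Measure.restrict_apply_le (μ := volume) D _).trans_eq (Complex.volume_ball _ _)
  have hsq : Tendsto (fun z => ‖z • u z‖ ^ 2) (𝓝[≠] 0) (𝓝 0) :=
    squeeze_zero' (Eventually.of_forall fun _ => by positivity) hbound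
      (by simpa using (hL2.tendsto_setIntegral_nhds_zero hvol).const_mul (4 / π))
  rw [tendsto_zero_iff_norm_tendsto_zero]
  simpa [Real.sqrt_sq (norm_nonneg _)] using hsq.sqrt

end

/-- Weighted-L² control forces at most a simple pole at the origin. -/
theorem simple_pole_of_weighted_L2
    (r : ℝ) (hr : 0 < r) (G : ℂ → ℂ)
    (hG : DifferentiableOn ℂ G (ball (0 : ℂ) r \ {0}))
    (hL2 : IntegrableOn (fun ζ => (‖G ζ‖) ^ 2 * (‖ζ‖) ^ 2)
      (ball (0 : ℂ) r \ {0}) volume) :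
    ∃ (A : ℂ) (h : ℂ → ℂ), DifferentiableOn ℂ h (ball (0 : ℂ) r) ∧
      ∀ ζ ∈ ball (0 : ℂ) r \ {0}, G ζ = A / ζ + h ζ := by
  set u : ℂ → ℂ := fun ζ => ζ * G ζ
  have hu : DifferentiableOn ℂ u (ball 0 r \ {0}) := differentiableOn_id.mul hG
  have hu_sq : IntegrableOn (fun w => ‖u w‖ ^ 2) (ball 0 r \ {0}) :=
    hL2.congr_fun (fun w _ => by simp [u, mul_pow, mul_comm])
      (measurableSet_ball.diff (measurableSet_singleton 0))
  set U := Function.update u 0 (limUnder (𝓝[≠] 0) u)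
  have hU : DifferentiableOn ℂ U (ball 0 r) :=
    differentiableOn_update_limUnder_of_tendsto_sub_smul (ball_mem_nhds 0 hr) hu
      (by simpa using tendsto_smul_of_integrableOn_norm_sq hr hu hu_sq)
  refine ⟨U 0, dslope U 0, (differentiableOn_dslope (ball_mem_nhds 0 hr)).mpr hU,
    fun ζ hζ => ?_⟩
  have hζ0 : ζ ≠ 0 := hζ.2
  have hslope := sub_smul_dslope U 0 ζ
  have hUζ : U ζ = ζ * G ζ := Function.update_of_ne hζ0 _ _
  rw [hUζ, sub_zero, smul_eq_mul] at hslope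
  field_simp
  linear_combination -hslope
end

section
/- Let r > 0 and let g : ℂ → ℂ be holomorphic on the punctured disc B(0, r) \ {0}. If ∫_{B(0,r)\{0}} |g|² dA < ∞, then the singularity at the origin is removable: there exists h : ℂ → ℂ holomorphic on the full disc B(0, r) with h(ζ) = g(ζ) for all ζ ∈ B(0, r) \ {0}. -/
open MeasureTheory Complex Metric Real Set Filter Asymptotics
open scoped Topology

/-!
Applying the area mean value property to `g²` gives `π ρ² ‖g z‖² ≤ ∫_{B(z, ρ)} ‖g‖²`. With
`ρ = ‖z‖ / 2` the disc `B(z, ρ)` lies in the punctured disc and its area tends to `0` as `z → 0`,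
so by absolute continuity of the integral `‖z g(z)‖² → 0`. Thus `g(z) = o(1 / z)`, and Riemann's
removable singularity theorem applies.
-/

theorem setIntegral_Ioo_neg_pi_pi_eq_circleAverage {E : Type*} [NormedAddCommGroup E]
    [NormedSpace ℝ E] (f : ℂ → E) (c : ℂ) (R : ℝ) :
    ∫ θ in Ioo (-π) π, f (circleMap c R θ) = (2 * π) • circleAverage f c R := by
  have hperiodic : Function.Periodic (fun θ => f (circleMap c R θ)) (2 * π) :=
    fun θ => by simp only [periodic_circleMap c R θ]
  have := hperiodic.intervalIntegral_add_eq (-π) 0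
  rw [circleAverage, smul_inv_smul₀ two_pi_pos.ne', ← integral_Ioc_eq_integral_Ioo,
    ← intervalIntegral.integral_of_le (by linarith [pi_pos])]
  convert this using 2 <;> ring

theorem circleMap_eq_add_polarCoord_symm (c : ℂ) (p : ℝ × ℝ) :
    circleMap c p.1 p.2 = c + Complex.polarCoord.symm p := by
  simp [circleMap, Complex.exp_mul_I, Complex.ofReal_cos, Complex.ofReal_sin]

theorem setIntegral_ball_eq_setIntegral_polar {E : Type*} [NormedAddCommGroup E]
    [NormedSpace ℝ E] (f : ℂ → E) (c : ℂ) (R : ℝ) :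
    ∫ z in ball c R, f z =
      ∫ p in Ioo 0 R ×ˢ Ioo (-π) π, p.1 • f (circleMap c p.1 p.2) := by
  have hS : Ioo 0 R ×ˢ Ioo (-π) π ⊆ Complex.polarCoord.target :=
    prod_mono Ioo_subset_Ioi_self subset_rfl
  rw [← integral_indicator measurableSet_ball,
    ← integral_add_left_eq_self (μ := volume) (f := (ball c R).indicator f) c,
    ← Complex.integral_comp_polarCoord_symm,
    ← inter_eq_self_of_subset_right hS,
    ← setIntegral_indicator (measurableSet_Ioo.prod measurableSet_Ioo)]
  refine setIntegral_congr_fun Complex.polarCoord.open_target.measurableSet fun p hp => ?_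
  obtain ⟨hρ, hθ⟩ : 0 < p.1 ∧ p.2 ∈ Ioo (-π) π := hp
  have hmem : c + Complex.polarCoord.symm p ∈ ball c R ↔ p.1 < R := by
    rw [mem_ball, dist_eq_norm, add_sub_cancel_left, Complex.norm_polarCoord_symm,
      abs_of_pos hρ]
  by_cases hρR : p.1 < R
  · have hp : p ∈ Ioo 0 R ×ˢ Ioo (-π) π := ⟨⟨hρ, hρR⟩, hθ⟩
    rw [indicator_of_mem (hmem.2 hρR), indicator_of_mem hp, circleMap_eq_add_polarCoord_symm]
  · rw [indicator_of_notMem (mt hmem.1 hρR), indicator_of_notMem (fun h => hρR h.1.2),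
      smul_zero]

theorem setIntegral_ball_eq_intervalIntegral_circleAverage {E : Type*}
    [NormedAddCommGroup E] [NormedSpace ℝ E] [CompleteSpace E] {f : ℂ → E} {c : ℂ} {R : ℝ}
    (hf : ContinuousOn f (closedBall c R)) (hR : 0 ≤ R) :
    ∫ z in ball c R, f z = ∫ ρ in 0..R, (2 * π * ρ) • circleAverage f c ρ := by
  have hpolar : ContinuousOn (fun p : ℝ × ℝ => p.1 • f (circleMap c p.1 p.2))
      (Icc 0 R ×ˢ Icc (-π) π) := by
    refine continuousOn_fst.smul (hf.comp (by fun_prop) fun p hp => ?_)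
    exact closedBall_subset_closedBall hp.1.2 (circleMap_mem_closedBall c hp.1.1 p.2)
  have hint : IntegrableOn (fun p : ℝ × ℝ => p.1 • f (circleMap c p.1 p.2))
      (Ioo 0 R ×ˢ Ioo (-π) π) (volume.prod volume) :=
    (hpolar.integrableOn_compact (isCompact_Icc.prod isCompact_Icc)).mono_set
      (prod_mono Ioo_subset_Icc_self Ioo_subset_Icc_self)
  rw [setIntegral_ball_eq_setIntegral_polar, Measure.volume_eq_prod, setIntegral_prod _ hint,
    intervalIntegral.integral_of_le hR, integral_Ioc_eq_integral_Ioo]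
  refine setIntegral_congr_fun measurableSet_Ioo fun ρ _ => ?_
  rw [integral_smul, setIntegral_Ioo_neg_pi_pi_eq_circleAverage, smul_smul, mul_comm ρ]

theorem DiffContOnCl.setIntegral_ball_eq_smul {E : Type*} [NormedAddCommGroup E]
    [NormedSpace ℂ E] [CompleteSpace E] {f : ℂ → E} {c : ℂ} {R : ℝ}
    (hf : DiffContOnCl ℂ f (ball c R)) (hR : 0 ≤ R) :
    ∫ z in ball c R, f z = (π * R ^ 2) • f c := by
  have hmean : ∀ ρ ∈ uIcc 0 R,
      (2 * π * ρ) • Real.circleAverage f c ρ = (2 * π * ρ) • f c := by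
    intro ρ hρ
    rw [uIcc_of_le hR] at hρ
    rw [(hf.mono (ball_subset_ball ((abs_of_nonneg hρ.1).le.trans hρ.2))).circleAverage]
  rw [setIntegral_ball_eq_intervalIntegral_circleAverage hf.continuousOn_ball hR,
    intervalIntegral.integral_congr hmean, intervalIntegral.integral_smul_const,
    intervalIntegral.integral_const_mul, integral_id]
  congr 1
  ring

theorem DiffContOnCl.sq_norm_le_setIntegral {f : ℂ → ℂ} {c : ℂ} {R : ℝ}
    (hf : DiffContOnCl ℂ f (ball c R)) (hR : 0 ≤ R) :
    π * R ^ 2 * ‖f c‖ ^ 2 ≤ ∫ z in ball c R, ‖f z‖ ^ 2 := by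
  calc π * R ^ 2 * ‖f c‖ ^ 2 = ‖∫ z in ball c R, f z • f z‖ := by
        rw [(hf.smul hf).setIntegral_ball_eq_smul hR, norm_smul, norm_smul,
          Real.norm_of_nonneg (by positivity : 0 ≤ π * R ^ 2), sq ‖f c‖]
    _ ≤ ∫ z in ball c R, ‖f z‖ ^ 2 := by
        simpa only [norm_smul, ← sq] using
          norm_integral_le_integral_norm (μ := volume.restrict (ball c R)) (fun z => f z • f z)

theorem closedBall_half_norm_subset {E : Type*} [NormedAddCommGroup E] {z : E} (hz : z ≠ 0) :
    closedBall z (‖z‖ / 2) ⊆ closedBall 0 (3 / 2 * ‖z‖) \ {0} := by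
  intro w hw
  rw [mem_closedBall, dist_eq_norm] at hw
  have hz' : 0 < ‖z‖ := norm_pos_iff.2 hz
  refine ⟨?_, fun hw0 => ?_⟩
  · rw [mem_closedBall_zero_iff]
    linarith [norm_le_norm_add_norm_sub' w z]
  · rw [mem_singleton_iff.1 hw0, zero_sub, norm_neg] at hw
    linarith

theorem Asymptotics.isLittleO_inv_sub_of_tendsto_sub_smul {E : Type*} [NormedAddCommGroup E]
    [NormedSpace ℂ E] {f : ℂ → E} {c : ℂ}
    (h : Tendsto (fun z => (z - c) • f z) (𝓝[≠] c) (𝓝 0)) :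
    f =o[𝓝[≠] c] fun z => (z - c)⁻¹ := by
  refine isLittleO_iff.2 fun ε hε => ?_
  filter_upwards [(tendsto_zero_iff_norm_tendsto_zero.1 h).eventually (eventually_le_nhds hε),
    self_mem_nhdsWithin] with z hz hzc
  have hzc' : 0 < ‖z - c‖ := norm_pos_iff.2 (sub_ne_zero.2 hzc)
  rw [norm_smul] at hz
  rw [norm_inv, ← div_eq_mul_inv, le_div_iff₀ hzc', mul_comm]
  exact hz

theorem MeasureTheory.IntegrableOn.tendsto_setIntegral_of_eventually_subset
    {α E ι : Type*} [MeasurableSpace α] [NormedAddCommGroup E] [NormedSpace ℝ E]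
    {μ : Measure α} {f : α → E} {U : Set α} (hf : IntegrableOn f U μ) {l : Filter ι}
    {s : ι → Set α} (hsU : ∀ᶠ i in l, s i ⊆ U) (hs : Tendsto (μ ∘ s) l (𝓝 0)) :
    Tendsto (fun i => ∫ x in s i, f x ∂μ) l (𝓝 0) := by
  have hsU' : Tendsto (μ.restrict U ∘ s) l (𝓝 0) :=
    tendsto_of_tendsto_of_tendsto_of_le_of_le tendsto_const_nhds hs (fun _ => zero_le)
      fun i => Measure.restrict_le_self (s i)
  refine (hf.tendsto_setIntegral_nhds_zero hsU').congr' ?_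
  filter_upwards [hsU] with i hi
  rw [Measure.restrict_restrict_of_subset hi]

theorem tendsto_volume_ball_half_norm :
    Tendsto (fun z : ℂ => volume (ball z (‖z‖ / 2))) (𝓝 0) (𝓝 0) := by
  have hradius : Tendsto (fun z : ℂ => ENNReal.ofReal (‖z‖ / 2)) (𝓝 0) (𝓝 0) :=
    (ENNReal.continuous_ofReal.comp (continuous_norm.div_const 2)).tendsto' 0 0 (by simp)
  simpa only [Complex.volume_ball, zero_pow two_ne_zero, zero_mul] using
    ENNReal.Tendsto.mul_const (ENNReal.Tendsto.pow hradius (n := 2))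
      (Or.inr ENNReal.coe_ne_top)

theorem tendsto_mul_of_sq_norm_integrableOn {g : ℂ → ℂ} {r : ℝ} (hr : 0 < r)
    (hg : DifferentiableOn ℂ g (ball 0 r \ {0}))
    (hL2 : IntegrableOn (fun ζ => ‖g ζ‖ ^ 2) (ball 0 r \ {0})) :
    Tendsto (fun z => z * g z) (𝓝[≠] 0) (𝓝 0) := by
  have hsub : ∀ᶠ z in 𝓝[≠] (0 : ℂ), closedBall z (‖z‖ / 2) ⊆ ball 0 r \ {0} := by
    have hnear : ∀ᶠ z in 𝓝 (0 : ℂ), 3 / 2 * ‖z‖ < r :=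
      ((continuous_norm.const_mul _).tendsto' 0 0 (by simp)).eventually (eventually_lt_nhds hr)
    filter_upwards [nhdsWithin_le_nhds hnear, self_mem_nhdsWithin] with z hzr hz
    exact (closedBall_half_norm_subset hz).trans
      (sdiff_subset_sdiff_left (closedBall_subset_ball hzr))
  have hsmall : Tendsto (fun z => ∫ w in ball z (‖z‖ / 2), ‖g w‖ ^ 2) (𝓝[≠] 0) (𝓝 0) :=
    hL2.tendsto_setIntegral_of_eventually_subset
      (hsub.mono fun _ hz => ball_subset_closedBall.trans hz)
      (tendsto_volume_ball_half_norm.mono_left nhdsWithin_le_nhds)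
  have hbound : ∀ᶠ z in 𝓝[≠] (0 : ℂ),
      ‖z * g z‖ ^ 2 ≤ 4 / π * ∫ w in ball z (‖z‖ / 2), ‖g w‖ ^ 2 := by
    filter_upwards [hsub] with z hz
    have hmean := (hg.diffContOnCl_ball hz).sq_norm_le_setIntegral (by positivity)
    rw [norm_mul, mul_pow, div_mul_eq_mul_div, le_div_iff₀ pi_pos]
    linarith
  have hsq : Tendsto (fun z => ‖z * g z‖ ^ 2) (𝓝[≠] 0) (𝓝 0) :=
    squeeze_zero' (.of_forall fun _ => by positivity) hbound
      (by simpa using hsmall.const_mul (4 / π))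
  rw [tendsto_zero_iff_norm_tendsto_zero]
  simpa only [Real.sqrt_sq, norm_nonneg, Real.sqrt_zero] using hsq.sqrt

/-- L² Riemann removable singularity theorem. -/
theorem removable_singularity_of_L2
    (r : ℝ) (hr : 0 < r) (g : ℂ → ℂ)
    (hg : DifferentiableOn ℂ g (ball (0 : ℂ) r \ {0}))
    (hL2 : IntegrableOn (fun ζ => ‖g ζ‖ ^ 2) (ball (0 : ℂ) r \ {0}) volume) :
    ∃ h : ℂ → ℂ, DifferentiableOn ℂ h (ball (0 : ℂ) r) ∧
      ∀ ζ ∈ ball (0 : ℂ) r \ {0}, h ζ = g ζ := by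
  have hpunctured : ball (0 : ℂ) r \ {0} ∈ 𝓝[≠] (0 : ℂ) :=
    sdiff_mem_nhdsWithin_compl (ball_mem_nhds 0 hr) {0}
  have hconst : Tendsto (fun z : ℂ => z * g 0) (𝓝[≠] 0) (𝓝 0) :=
    ((continuous_mul_const (g 0)).tendsto' 0 0 (zero_mul _)).mono_left nhdsWithin_le_nhds
  have ho : (fun z => g z - g 0) =o[𝓝[≠] 0] fun z => (z - 0)⁻¹ :=
    isLittleO_inv_sub_of_tendsto_sub_smul <| by
      simpa only [sub_zero, smul_eq_mul, mul_sub] using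
        (tendsto_mul_of_sq_norm_integrableOn hr hg hL2).sub hconst
  have hext := differentiableOn_update_limUnder_insert_of_isLittleO hpunctured hg ho
  rw [insert_sdiff_singleton, insert_eq_of_mem (mem_ball_self hr)] at hext
  exact ⟨_, hext, fun ζ hζ => Function.update_of_ne hζ.2 _ _⟩
end

section
/- Double reflection from a quadrant to the punctured disc: let r > 0 and let F : ℂ → ℂ be holomorphic on the open quarter-disc Q(r) := {ζ : |ζ| < r ∧ Re ζ > 0 ∧ Im ζ > 0} and continuous on {ζ : |ζ| < r ∧ Re ζ ≥ 0 ∧ Im ζ ≥ 0} \ {0}. Assume Re F(x) = 0 for every real x ∈ (0, r) and Im F(iy) = 0 for every real y ∈ (0, r). Then there exists G : ℂ → ℂ holomorphic on the punctured disc B(0, r) \ {0} such that G(ζ) = F(ζ) for every ζ with |ζ| < r, Re ζ ≥ 0, Im ζ ≥ 0, ζ ≠ 0. Moreover, if additionally ∫_{Q(r)} |F(ζ)|²·|ζ|² dA(ζ) < ∞, then ∫_{B(0,r)\{0}} |G(ζ)|²·|ζ|² dA(ζ) = 4·∫_{Q(r)} |F(ζ)|²·|ζ|² dA(ζ) < ∞.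 -/
/-!
Reflect `F` across the real axis as `z ↦ -conj (F (conj z))`, which agrees with `F` on `(0, r)`
because `Re F = 0` there, and then across the imaginary axis as `z ↦ conj (F₁ (-conj z))`, which
agrees with `F₁` on the imaginary axis because `Im F₁ = 0` there. Each glued function is continuous
and holomorphic off a line, hence holomorphic by Morera's theorem: a rectangle crossing the line
splits into two rectangles having an edge on it, and Cauchy–Goursat needs differentiability only
in the open rectangle.

The result satisfies `‖G z‖ = ‖F (|Re z| + |Im z| i)‖`, so the weighted integrand is invariant
under both reflections; as the axes are null, each of the four quadrants contributes the integral
over `Q`.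
-/

open MeasureTheory Complex Metric
open Set ComplexConjugate
open scoped Interval

section Morera

variable {E : Type*} [NormedAddCommGroup E] [NormedSpace ℂ E] {f : ℂ → E}

theorem Complex.isConservativeOn_reProdIm_of_differentiableOn_im_ne_zero {s t : Set ℝ}
    (ht : t.OrdConnected) (ht₀ : 0 ∈ t) (hc : ContinuousOn f (s ×ℂ t))
    (hd : DifferentiableOn ℂ f (s ×ℂ t \ {z | z.im = 0})) :
    IsConservativeOn f (s ×ℂ t) := by
  have hbound : ∀ a b : ℂ, a.im = 0 ∨ b.im = 0 → [[a.re, b.re]] ⊆ s → [[a.im, b.im]] ⊆ t →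
      (∫ x : ℝ in a.re..b.re, f (x + a.im * I)) - (∫ x : ℝ in a.re..b.re, f (x + b.im * I)) +
      I • (∫ y : ℝ in a.im..b.im, f (b.re + y * I)) -
      I • (∫ y : ℝ in a.im..b.im, f (a.re + y * I)) = 0 := by
    intro a b hab has hat
    refine integral_boundary_rect_eq_zero_of_continuousOn_of_differentiableOn f a b
      (hc.mono (reProdIm_subset_iff'.2 (Or.inl ⟨has, hat⟩))) (hd.mono ?_)
    rintro u ⟨hu₁, hu₂⟩
    refine ⟨⟨has (Ioo_subset_Icc_self hu₁), hat (Ioo_subset_Icc_self hu₂)⟩, fun hu => ?_⟩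
    simp only [mem_preimage, mem_Ioo, min_lt_iff, lt_max_iff] at hu₂
    rcases hab with h | h <;> rw [h] at hu₂ <;> grind
  intro z w hzw
  obtain ⟨hre, him⟩ : [[z.re, w.re]] ⊆ s ∧ [[z.im, w.im]] ⊆ t := by
    simpa [Rectangle, reProdIm_subset_iff', nonempty_uIcc.ne_empty] using hzw
  have hsplit : ∀ x ∈ s, (∫ y : ℝ in z.im..w.im, f (x + y * I)) =
      (∫ y : ℝ in z.im..0, f (x + y * I)) + ∫ y : ℝ in 0..w.im, f (x + y * I) := by
    have hvert : ∀ x ∈ s, ∀ a ∈ t, ∀ b ∈ t,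
        IntervalIntegrable (fun y : ℝ => f (x + y * I)) volume a b := fun x hx a ha b hb =>
      (hc.comp (by fun_prop) fun y hy =>
        ⟨by simpa using hx, by simpa using ht.uIcc_subset ha hb hy⟩).intervalIntegrable
    intro x hx
    exact (intervalIntegral.integral_add_adjacent_intervals
      (hvert x hx _ (him left_mem_uIcc) _ ht₀) (hvert x hx _ ht₀ _ (him right_mem_uIcc))).symm
  -- The rectangle is the union of its parts below and above the real axis.
  have hlower := hbound z w.re (by simp) (by simpa using hre)
    (by simpa using ht.uIcc_subset (him left_mem_uIcc) ht₀)
  have hupper := hbound z.re w (by simp) (by simpa using hre)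
    (by simpa using ht.uIcc_subset ht₀ (him right_mem_uIcc))
  simp only [ofReal_re, ofReal_im, ofReal_zero, zero_mul, add_zero] at hlower hupper
  rw [← add_eq_zero_iff_eq_neg, wedgeIntegral_add_wedgeIntegral_eq,
    hsplit _ (hre right_mem_uIcc), hsplit _ (hre left_mem_uIcc)]
  linear_combination (norm := module) hlower + hupper

theorem Complex.differentiableOn_of_differentiableOn_im_ne_zero [CompleteSpace E] {U : Set ℂ}
    (hU : IsOpen U) (hc : ContinuousOn f U) (hd : DifferentiableOn ℂ f (U \ {z | z.im = 0})) :
    DifferentiableOn ℂ f U := by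
  intro z hz
  by_cases hz₀ : z.im = 0
  · obtain ⟨ε, hε, hball⟩ := Metric.isOpen_iff.1 hU z hz
    set S := ball z.re (ε / 2) ×ℂ ball 0 (ε / 2)
    have hSU : S ⊆ U := fun u ⟨hu₁, hu₂⟩ => hball <| by
      rw [mem_preimage, Real.ball_eq_Ioo] at hu₁ hu₂
      rw [mem_ball, dist_eq]
      calc ‖u - z‖ ≤ |(u - z).re| + |(u - z).im| := norm_le_abs_re_add_abs_im _
        _ < ε := by simp only [sub_re, sub_im, hz₀, sub_zero, mem_Ioo] at hu₁ hu₂ ⊢; grind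
    have hSopen : IsOpen S := isOpen_ball.reProdIm isOpen_ball
    have hSd : DifferentiableOn ℂ f S :=
      (isConservativeOn_and_continuousOn_iff_isDifferentiableOn hSopen).1
        ⟨isConservativeOn_reProdIm_of_differentiableOn_im_ne_zero
          (Real.ball_eq_Ioo 0 _ ▸ ordConnected_Ioo) (mem_ball_self (by positivity))
          (hc.mono hSU) (hd.mono (sdiff_subset_sdiff_left hSU)), hc.mono hSU⟩
    exact (hSd.differentiableAt (hSopen.mem_nhds
      ⟨mem_ball_self (by positivity), by simp [hz₀, hε]⟩)).differentiableWithinAt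
  · exact (hd.differentiableAt ((hU.sdiff (isClosed_eq continuous_im continuous_const)).mem_nhds
      ⟨hz, hz₀⟩)).differentiableWithinAt

end Morera

section Reflection

/-- The glued function is continuous across the axis exactly when `f = ε * conj f` there. -/
noncomputable def reflectAcrossReal (ε : ℂ) (f : ℂ → ℂ) (z : ℂ) : ℂ :=
  if 0 ≤ z.im then f z else ε * conj (f (conj z))

noncomputable def reflectAcrossImag (ε : ℂ) (f : ℂ → ℂ) (z : ℂ) : ℂ :=
  if 0 ≤ z.re then f z else ε * conj (f (-conj z))

variable {ε : ℂ} {f : ℂ → ℂ}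

theorem continuousOn_reflectAcrossReal {s : Set ℂ} (hs : ∀ z ∈ s, conj z ∈ s)
    (hc : ContinuousOn f (s ∩ {z | 0 ≤ z.im}))
    (hb : ∀ z ∈ s, z.im = 0 → ε * conj (f z) = f z) :
    ContinuousOn (reflectAcrossReal ε f) s := by
  refine ContinuousOn.if (fun z ⟨hzs, hzfr⟩ => ?_) (hc.mono ?_) ?_
  · rw [frontier_setOfPred_le_im] at hzfr
    rw [conj_eq_iff_im.2 hzfr, hb z hzs hzfr]
  · rw [closure_le_eq continuous_const continuous_im]
  · have hcl : closure {z : ℂ | ¬0 ≤ z.im} ⊆ {z | z.im ≤ 0} :=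
      closure_minimal (fun z hz => le_of_not_ge hz) (isClosed_le continuous_im continuous_const)
    refine ((continuous_const.mul continuous_conj).comp_continuousOn
      (hc.comp continuous_conj.continuousOn fun z hz => ⟨hs z hz.1, ?_⟩)).mono
      (inter_subset_inter_right s hcl)
    simpa using hz.2

theorem differentiableOn_reflectAcrossReal {U : Set ℂ} (hU : IsOpen U)
    (hUc : ∀ z ∈ U, conj z ∈ U) (hc : ContinuousOn f (U ∩ {z | 0 ≤ z.im}))
    (hd : DifferentiableOn ℂ f (U ∩ {z | 0 < z.im}))
    (hb : ∀ z ∈ U, z.im = 0 → ε * conj (f z) = f z) :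
    DifferentiableOn ℂ (reflectAcrossReal ε f) U := by
  refine differentiableOn_of_differentiableOn_im_ne_zero hU
    (continuousOn_reflectAcrossReal hUc hc hb) ?_
  have hUd : IsOpen (U ∩ {z | 0 < z.im}) := hU.inter (isOpen_lt continuous_const continuous_im)
  rintro z ⟨hzU, hz⟩
  rcases lt_or_gt_of_ne hz with hneg | hpos
  · have hconj : DifferentiableAt ℂ (conj ∘ f ∘ conj) z := differentiableAt_conj_conj_iff.2
      (hd.differentiableAt (hUd.mem_nhds ⟨hUc z hzU, by simpa using hneg⟩))
    refine ((hconj.const_mul ε).congr_of_eventuallyEq ?_).differentiableWithinAt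
    filter_upwards [(isOpen_lt continuous_im continuous_const).mem_nhds hneg] with w hw
    exact if_neg (not_le.2 hw)
  · refine ((hd.differentiableAt (hUd.mem_nhds ⟨hzU, hpos⟩)).congr_of_eventuallyEq ?_)
      |>.differentiableWithinAt
    filter_upwards [(isOpen_lt continuous_const continuous_im).mem_nhds hpos] with w hw
    exact if_pos hw.le

theorem reflectAcrossImag_eq_reflectAcrossReal (z : ℂ) :
    reflectAcrossImag ε f z = reflectAcrossReal ε (fun w => f (-I * w)) (I * z) := by
  have h₁ : -I * (I * z) = z := by rw [← mul_assoc, neg_mul, I_mul_I, neg_neg, one_mul]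
  have h₂ : I * (I * conj z) = -conj z := by rw [← mul_assoc, I_mul_I, neg_one_mul]
  simp [reflectAcrossImag, reflectAcrossReal, h₁, h₂]

theorem differentiableOn_reflectAcrossImag {U : Set ℂ} (hU : IsOpen U)
    (hUc : ∀ z ∈ U, -conj z ∈ U) (hc : ContinuousOn f (U ∩ {z | 0 ≤ z.re}))
    (hd : DifferentiableOn ℂ f (U ∩ {z | 0 < z.re}))
    (hb : ∀ z ∈ U, z.re = 0 → ε * conj (f z) = f z) :
    DifferentiableOn ℂ (reflectAcrossImag ε f) U := by
  have hrot : DifferentiableOn ℂ (reflectAcrossReal ε (fun w => f (-I * w)))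
      ((fun w => -I * w) ⁻¹' U) := by
    refine differentiableOn_reflectAcrossReal (hU.preimage (by fun_prop)) (fun w hw => ?_)
      (hc.comp (by fun_prop) fun w hw => ?_) (hd.comp (by fun_prop) fun w hw => ?_)
      fun w hw hw₀ => hb _ hw (by simpa using hw₀)
    · simpa using hUc _ hw
    · simpa using hw
    · simpa using hw
  refine (hrot.comp (by fun_prop) fun z hz => ?_).congr fun z _ =>
    reflectAcrossImag_eq_reflectAcrossReal z
  simpa [← mul_assoc] using hz

theorem norm_reflectAcrossReal (hε : ‖ε‖ = 1) (z : ℂ) :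
    ‖reflectAcrossReal ε f z‖ = ‖f (z.re + |z.im| * I)‖ := by
  rcases le_or_gt 0 z.im with h | h
  · simp [reflectAcrossReal, h, abs_of_nonneg h, re_add_im]
  · simp only [reflectAcrossReal, if_neg (not_le.2 h), norm_mul, hε, norm_conj, one_mul]
    congr 2; apply Complex.ext <;> simp [abs_of_neg h]

theorem norm_reflectAcrossImag (hε : ‖ε‖ = 1) (z : ℂ) :
    ‖reflectAcrossImag ε f z‖ = ‖f (|z.re| + z.im * I)‖ := by
  rcases le_or_gt 0 z.re with h | h
  · simp [reflectAcrossImag, h, abs_of_nonneg h, re_add_im]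
  · simp only [reflectAcrossImag, if_neg (not_le.2 h), norm_mul, hε, norm_conj, one_mul]
    congr 2; apply Complex.ext <;> simp [abs_of_neg h]

theorem im_reflectAcrossReal_neg_one (z : ℂ) :
    (reflectAcrossReal (-1) f z).im = (f (z.re + |z.im| * I)).im := by
  rcases le_or_gt 0 z.im with h | h
  · simp [reflectAcrossReal, h, abs_of_nonneg h, re_add_im]
  · simp only [reflectAcrossReal, if_neg (not_le.2 h), neg_one_mul, neg_im, conj_im, neg_neg]
    congr 2; apply Complex.ext <;> simp [abs_of_neg h]

noncomputable def reflectQuadrant (f : ℂ → ℂ) : ℂ → ℂ :=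
  reflectAcrossImag 1 (reflectAcrossReal (-1) f)

theorem reflectQuadrant_of_nonneg {z : ℂ} (hre : 0 ≤ z.re) (him : 0 ≤ z.im) :
    reflectQuadrant f z = f z := by
  simp [reflectQuadrant, reflectAcrossImag, reflectAcrossReal, hre, him]

theorem norm_reflectQuadrant (z : ℂ) : ‖reflectQuadrant f z‖ = ‖f (|z.re| + |z.im| * I)‖ := by
  simp [reflectQuadrant, norm_reflectAcrossImag, norm_reflectAcrossReal]

theorem differentiableOn_reflectQuadrant {U : Set ℂ} (hU : IsOpen U)
    (hUc : ∀ z ∈ U, conj z ∈ U) (hUn : ∀ z ∈ U, -z ∈ U)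
    (hc : ContinuousOn f (U ∩ {z | 0 ≤ z.re ∧ 0 ≤ z.im}))
    (hd : DifferentiableOn ℂ f (U ∩ {z | 0 < z.re ∧ 0 < z.im}))
    (hre : ∀ x : ℝ, (x : ℂ) ∈ U → 0 ≤ x → (f x).re = 0)
    (him : ∀ y : ℝ, I * y ∈ U → 0 ≤ y → (f (I * y)).im = 0) :
    DifferentiableOn ℂ (reflectQuadrant f) U := by
  have hc' : ContinuousOn f (U ∩ {z | 0 ≤ z.re} ∩ {z | 0 ≤ z.im}) := by
    simpa only [inter_assoc, ← ofPred_and] using hc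
  have hre' : ∀ z ∈ U ∩ {z | 0 ≤ z.re}, z.im = 0 → -1 * conj (f z) = f z := by
    rintro z ⟨hzU, hz⟩ hz₀
    have hzre : (z.re : ℂ) = z := Complex.ext rfl (by simpa using hz₀.symm)
    have := hre z.re (hzre ▸ hzU) hz
    apply Complex.ext <;> simp [hzre ▸ this]
  have hF₁c : ContinuousOn (reflectAcrossReal (-1) f) (U ∩ {z | 0 ≤ z.re}) :=
    continuousOn_reflectAcrossReal (fun z ⟨hzU, hz⟩ => ⟨hUc z hzU, by simpa using hz⟩) hc' hre'
  have hF₁d : DifferentiableOn ℂ (reflectAcrossReal (-1) f) (U ∩ {z | 0 < z.re}) :=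
    differentiableOn_reflectAcrossReal (hU.inter (isOpen_lt continuous_const continuous_re))
      (fun z ⟨hzU, hz⟩ => ⟨hUc z hzU, by simpa using hz⟩)
      (hc'.mono fun z ⟨⟨hzU, (hz : 0 < z.re)⟩, hz'⟩ => ⟨⟨hzU, hz.le⟩, hz'⟩)
      (by simpa only [inter_assoc, ← ofPred_and] using hd)
      fun z ⟨hzU, (hz : 0 < z.re)⟩ => hre' z ⟨hzU, hz.le⟩
  refine differentiableOn_reflectAcrossImag hU (fun z hz => hUn _ (hUc z hz)) hF₁c hF₁d
    fun z hzU hz => ?_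
  rw [one_mul, conj_eq_iff_im, im_reflectAcrossReal_neg_one, hz, ofReal_zero, zero_add, mul_comm]
  refine him |z.im| ?_ (abs_nonneg _)
  rcases le_or_gt 0 z.im with h | h
  · convert hzU using 1; apply Complex.ext <;> simp [hz, abs_of_nonneg h]
  · convert hUn z hzU using 1; apply Complex.ext <;> simp [hz, abs_of_neg h]

end Reflection

section Symmetrization

variable {E : Type*} [NormedAddCommGroup E] [NormedSpace ℝ E]

theorem MeasureTheory.MeasurePreserving.integrableOn_and_setIntegral_eq_two_smul
    {α : Type*} [MeasurableSpace α] {μ : Measure α} {σ : α → α} {g : α → E} {s t : Set α}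
    (hσ : MeasurePreserving σ μ μ) (hσe : MeasurableEmbedding σ) (hg : ∀ x, g (σ x) = g x)
    (ht : MeasurableSet t) (hdisj : Disjoint t (σ ⁻¹' t)) (hst : s =ᵐ[μ] (t ∪ σ ⁻¹' t : Set α))
    (hint : IntegrableOn g t μ) :
    IntegrableOn g s μ ∧ ∫ x in s, g x ∂μ = 2 • ∫ x in t, g x ∂μ := by
  have hgσ : g ∘ σ = g := funext hg
  have hint' : IntegrableOn g (σ ⁻¹' t) μ := by
    rw [← hgσ]; exact (hσ.integrableOn_comp_preimage hσe).2 hint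
  have hσt : ∫ x in σ ⁻¹' t, g x ∂μ = ∫ x in t, g x ∂μ := by
    conv_lhs => rw [← hgσ]
    exact hσ.setIntegral_preimage_emb hσe g t
  refine ⟨(hint.union hint').congr_set_ae hst, ?_⟩
  rw [setIntegral_congr_set hst, setIntegral_union hdisj (hσe.measurable ht) hint hint', hσt,
    two_smul]

variable {F : Type*} [NormedAddCommGroup F] [NormedSpace ℝ F] [MeasurableSpace F] [BorelSpace F]
  [FiniteDimensional ℝ F]

theorem MeasureTheory.Measure.addHaar_setOf_eq_zero (μ : Measure F) [μ.IsAddHaarMeasure]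
    {L : F →L[ℝ] ℝ} (hL : L ≠ 0) : μ {x | L x = 0} = 0 :=
  Measure.addHaar_submodule μ (LinearMap.ker (L : F →ₗ[ℝ] ℝ))
    (by rw [Ne, LinearMap.ker_eq_top]; exact fun h => hL (ContinuousLinearMap.coe_injective h))

theorem MeasureTheory.MeasurePreserving.integrableOn_and_setIntegral_eq_two_smul_setOf_pos
    {μ : Measure F} [μ.IsAddHaarMeasure] {σ : F → F} {g : F → E} {s : Set F} {L : F →L[ℝ] ℝ}
    (hσ : MeasurePreserving σ μ μ) (hσe : MeasurableEmbedding σ) (hL : L ≠ 0)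
    (hLσ : ∀ x, L (σ x) = -L x) (hs : MeasurableSet s) (hσs : σ ⁻¹' s = s)
    (hg : ∀ x, g (σ x) = g x) (hint : IntegrableOn g (s ∩ {x | 0 < L x}) μ) :
    IntegrableOn g s μ ∧ ∫ x in s, g x ∂μ = 2 • ∫ x in s ∩ {x | 0 < L x}, g x ∂μ := by
  have hpre : σ ⁻¹' (s ∩ {x | 0 < L x}) = s ∩ {x | L x < 0} := by
    rw [preimage_inter, hσs]; ext x; simp [hLσ]
  refine hσ.integrableOn_and_setIntegral_eq_two_smul hσe hg
    (hs.inter (measurableSet_lt measurable_const L.measurable)) ?_ ?_ hint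
  · rw [hpre]
    exact disjoint_left.2 fun x hx hx' => lt_asymm (show 0 < L x from hx.2) hx'.2
  · rw [hpre, ← inter_union_distrib_left]
    refine (inter_ae_eq_left_of_ae_eq_univ (ae_eq_univ.2 ?_)).symm
    convert μ.addHaar_setOf_eq_zero hL using 2
    ext x; simp [le_antisymm_iff (a := L x), and_comm]

theorem Complex.integrableOn_and_setIntegral_eq_four_smul_quadrant {g : ℂ → E} {s : Set ℂ}
    (hs : MeasurableSet s) (hsc : conj ⁻¹' s = s) (hsn : Neg.neg ⁻¹' s = s)
    (hgc : ∀ z, g (conj z) = g z) (hgn : ∀ z, g (-z) = g z)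
    (hint : IntegrableOn g (s ∩ {z | 0 < z.re ∧ 0 < z.im})) :
    IntegrableOn g s ∧ ∫ z in s, g z = 4 • ∫ z in s ∩ {z | 0 < z.re ∧ 0 < z.im}, g z := by
  let σ : ℂ ≃ₗᵢ[ℝ] ℂ := conjLIE.trans (LinearIsometryEquiv.neg ℝ)
  have hsc' (z : ℂ) : conj z ∈ s ↔ z ∈ s := Set.ext_iff.1 hsc z
  have hsn' (z : ℂ) : -z ∈ s ↔ z ∈ s := Set.ext_iff.1 hsn z
  have hquadrant : s ∩ {z | 0 < z.im} ∩ {z | 0 < z.re} = s ∩ {z | 0 < z.re ∧ 0 < z.im} := by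
    ext z; simp only [mem_inter_iff, mem_ofPred_eq]; tauto
  obtain ⟨hint', hJ⟩ := σ.measurePreserving.integrableOn_and_setIntegral_eq_two_smul_setOf_pos
    σ.toHomeomorph.measurableEmbedding (L := reCLM) (s := s ∩ {z | 0 < z.im})
    (fun h => by simpa using congr($h 1)) (fun z => by simp [σ])
    (hs.inter (measurableSet_lt measurable_const measurable_im)) (by ext z; simp [σ, hsc', hsn'])
    (g := g) (fun z => by simp [σ, hgc, hgn]) (by simpa [hquadrant] using hint)
  obtain ⟨hint'', hJ'⟩ :=
    conjLIE.measurePreserving.integrableOn_and_setIntegral_eq_two_smul_setOf_pos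
      conjLIE.toHomeomorph.measurableEmbedding (L := imCLM) (s := s)
      (fun h => by simpa using congr($h I)) (fun z => by simp) hs hsc hgc (by simpa using hint')
  simp only [reCLM_apply, imCLM_apply, hquadrant] at hJ hJ'
  rw [hJ', hJ, smul_smul]
  exact ⟨hint'', rfl⟩

end Symmetrization

theorem double_reflection_quadrant_general
    (r : ℝ) (F : ℂ → ℂ)
    (Q : Set ℂ) (hQ : Q = {ζ : ℂ | ‖ζ‖ < r ∧ 0 < ζ.re ∧ 0 < ζ.im})
    (hF : DifferentiableOn ℂ F Q)
    (hFc : ContinuousOn F ({ζ : ℂ | ‖ζ‖ < r ∧ 0 ≤ ζ.re ∧ 0 ≤ ζ.im} \ {0}))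
    (hDir : ∀ x : ℝ, 0 < x → x < r → (F (x : ℂ)).re = 0)
    (hNeu : ∀ y : ℝ, 0 < y → y < r → (F (Complex.I * (y : ℂ))).im = 0) :
    ∃ G : ℂ → ℂ, DifferentiableOn ℂ G (ball (0 : ℂ) r \ {0}) ∧
      (∀ ζ : ℂ, ‖ζ‖ < r → 0 ≤ ζ.re → 0 ≤ ζ.im → ζ ≠ 0 → G ζ = F ζ) ∧
      (IntegrableOn (fun ζ => (‖F ζ‖) ^ 2 * (‖ζ‖) ^ 2) Q volume →
        IntegrableOn (fun ζ => (‖G ζ‖) ^ 2 * (‖ζ‖) ^ 2)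
          (ball (0 : ℂ) r \ {0}) volume ∧
        ∫ ζ in ball (0 : ℂ) r \ {0}, (‖G ζ‖) ^ 2 * (‖ζ‖) ^ 2 ∂volume
          = 4 * ∫ ζ in Q, (‖F ζ‖) ^ 2 * (‖ζ‖) ^ 2 ∂volume) := by
  set B := ball (0 : ℂ) r \ {0}
  have hB (z : ℂ) : z ∈ B ↔ ‖z‖ < r ∧ z ≠ 0 := by simp [B]
  have hBopen : IsOpen B := isOpen_ball.sdiff isClosed_singleton
  have hQB : Q = B ∩ {z | 0 < z.re ∧ 0 < z.im} := by
    ext z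
    simp only [hQ, hB, mem_inter_iff, mem_ofPred_eq]
    exact ⟨fun ⟨h, hre, him⟩ => ⟨⟨h, fun h0 => by simp [h0] at hre⟩, hre, him⟩,
      fun ⟨⟨h, _⟩, hre, him⟩ => ⟨h, hre, him⟩⟩
  have hGd : DifferentiableOn ℂ (reflectQuadrant F) B := by
    refine differentiableOn_reflectQuadrant hBopen (by simp [hB]) (by simp [hB])
      (hFc.mono fun z ⟨hzB, hz⟩ => ⟨⟨((hB z).1 hzB).1, hz⟩, ((hB z).1 hzB).2⟩) (hQB ▸ hF)
      (fun x hx hx₀ => ?_) fun y hy hy₀ => ?_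
    · simp [hB] at hx
      exact hDir x (hx₀.lt_of_ne' hx.2) ((le_abs_self x).trans_lt hx.1)
    · simp [hB] at hy
      exact hNeu y (hy₀.lt_of_ne' hy.2) ((le_abs_self y).trans_lt hy.1)
  refine ⟨reflectQuadrant F, hGd, fun z _ hre him _ => reflectQuadrant_of_nonneg hre him,
    fun hint => ?_⟩
  have hQGF : EqOn (fun ζ => ‖reflectQuadrant F ζ‖ ^ 2 * ‖ζ‖ ^ 2)
      (fun ζ => ‖F ζ‖ ^ 2 * ‖ζ‖ ^ 2) Q :=
    fun z hz => by rw [hQ] at hz; simp [reflectQuadrant_of_nonneg hz.2.1.le hz.2.2.le]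
  have hQm : MeasurableSet Q := by
    rw [hQB]; exact hBopen.measurableSet.inter (by measurability)
  rw [← setIntegral_congr_fun hQm hQGF, hQB]
  rw [← integrableOn_congr_fun hQGF hQm, hQB] at hint
  simpa using Complex.integrableOn_and_setIntegral_eq_four_smul_quadrant hBopen.measurableSet
    (by ext z; simp [hB]) (by ext z; simp [hB]) (fun z => by simp [norm_reflectQuadrant])
    (fun z => by simp [norm_reflectQuadrant]) hint

/-- Double Schwarz reflection from the quarter-disc to the punctured disc,
with control of the weighted L² norm. -/
theorem double_reflection_quadrant
    (r : ℝ) (hr : 0 < r) (F : ℂ → ℂ)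
    (Q : Set ℂ) (hQ : Q = {ζ : ℂ | ‖ζ‖ < r ∧ 0 < ζ.re ∧ 0 < ζ.im})
    (hF : DifferentiableOn ℂ F Q)
    (hFc : ContinuousOn F ({ζ : ℂ | ‖ζ‖ < r ∧ 0 ≤ ζ.re ∧ 0 ≤ ζ.im} \ {0}))
    (hDir : ∀ x : ℝ, 0 < x → x < r → (F (x : ℂ)).re = 0)
    (hNeu : ∀ y : ℝ, 0 < y → y < r → (F (Complex.I * (y : ℂ))).im = 0) :
    ∃ G : ℂ → ℂ, DifferentiableOn ℂ G (ball (0 : ℂ) r \ {0}) ∧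
      (∀ ζ : ℂ, ‖ζ‖ < r → 0 ≤ ζ.re → 0 ≤ ζ.im → ζ ≠ 0 → G ζ = F ζ) ∧
      (IntegrableOn (fun ζ => (‖F ζ‖) ^ 2 * (‖ζ‖) ^ 2) Q volume →
        IntegrableOn (fun ζ => (‖G ζ‖) ^ 2 * (‖ζ‖) ^ 2)
          (ball (0 : ℂ) r \ {0}) volume ∧
        ∫ ζ in ball (0 : ℂ) r \ {0}, (‖G ζ‖) ^ 2 * (‖ζ‖) ^ 2 ∂volume
          = 4 * ∫ ζ in Q, (‖F ζ‖) ^ 2 * (‖ζ‖) ^ 2 ∂volume) :=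
  double_reflection_quadrant_general r F Q hQ hF hFc hDir hNeu
end

section
/- Reality of the leading coefficient: let δ > 0 and let f : ℂ → ℂ be continuous on S(δ) := {z ∈ ℂ : |z| < δ ∧ Im z ≥ 0} \ {0}. Suppose there exist A ∈ ℂ and M ≥ 0 such that |f(z) − A·z^{−1/2}| ≤ M for all z ∈ S(δ) (principal branch of z^{−1/2}), and that Im f(x) = 0 for every real x ∈ (−δ, 0). Then Re A = 0, i.e. A = i·α for some α ∈ ℝ. -/
/-!
On the negative real axis `Im f = 0` and `z ^ (-1/2) = -i |z| ^ (-1/2)`, so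
`Im (f z - A z ^ (-1/2)) = Re A · |z| ^ (-1/2)`. This blows up as `z → 0⁻` unless `Re A = 0`,
contradicting the bound `M`.
-/

open Complex Real

open Filter Set Topology in
lemma eq_zero_of_abs_mul_rpow_le {c r δ M : ℝ} (hr : r < 0) (hδ : 0 < δ)
    (h : ∀ t ∈ Ioo 0 δ, |c| * t ^ r ≤ M) : c = 0 := by
  by_contra hc
  have hlim : Tendsto (fun t : ℝ => |c| * t ^ r) (𝓝[>] 0) atTop :=
    (tendsto_rpow_neg_nhdsGT_zero hr).const_mul_atTop (abs_pos.2 hc)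
  obtain ⟨t, hlarge, hsmall⟩ :=
    ((hlim.eventually_gt_atTop M).and (eventually_of_mem (Ioo_mem_nhdsGT hδ) h)).exists
  exact hlarge.not_ge hsmall

/-- `arg x = π` for `x < 0`, so `x ^ (-1/2) = |x| ^ (-1/2) * exp (-iπ/2)`. -/
lemma cpow_neg_half_of_neg {x : ℝ} (hx : x < 0) :
    (x : ℂ) ^ (-(1 : ℂ) / 2) = -I * ((|x| ^ (-(1 : ℝ) / 2) : ℝ) : ℂ) := by
  have hexp : exp (π * I * (-(1 : ℂ) / 2)) = -I := by
    rw [show (π : ℂ) * I * (-(1 : ℂ) / 2) = ((-(π / 2) : ℝ) : ℂ) * I by push_cast; ring,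
      exp_mul_I]
    simp
  rw [ofReal_cpow_of_nonpos hx.le, hexp, abs_of_neg hx, ofReal_cpow (neg_nonneg.2 hx.le)]
  push_cast
  ring

lemma abs_re_mul_le_norm_sub_mul_cpow_neg_half {w A : ℂ} {x : ℝ} (hx : x < 0) (hw : w.im = 0) :
    |A.re| * |x| ^ (-(1 : ℝ) / 2) ≤ ‖w - A * (x : ℂ) ^ (-(1 : ℂ) / 2)‖ := by
  have him : (w - A * (x : ℂ) ^ (-(1 : ℂ) / 2)).im = A.re * |x| ^ (-(1 : ℝ) / 2) := by
    simp [cpow_neg_half_of_neg hx, hw]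
  calc |A.re| * |x| ^ (-(1 : ℝ) / 2)
      = |A.re * |x| ^ (-(1 : ℝ) / 2)| := by
        rw [abs_mul, abs_of_nonneg (Real.rpow_nonneg (abs_nonneg x) _)]
    _ ≤ ‖w - A * (x : ℂ) ^ (-(1 : ℂ) / 2)‖ := him ▸ abs_im_le_norm _

theorem leading_coefficient_purely_imaginary_general
    (δ : ℝ) (hδ : 0 < δ) (f : ℂ → ℂ)
    (S : Set ℂ) (hS : S = {z : ℂ | ‖z‖ < δ ∧ 0 ≤ z.im} \ {0})
    (A : ℂ) (M : ℝ)
    (hbound : ∀ z ∈ S, ‖f z - A * z ^ (-(1 : ℂ)/2)‖ ≤ M)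
    (hNeu : ∀ x : ℝ, -δ < x → x < 0 → (f (x : ℂ)).im = 0) :
    A.re = 0 := by
  refine eq_zero_of_abs_mul_rpow_le (r := -(1 : ℝ) / 2) (M := M) (by norm_num) hδ
    fun t ⟨ht0, htδ⟩ => ?_
  have hmem : ((-t : ℝ) : ℂ) ∈ S := by
    rw [hS]
    refine ⟨⟨?_, by simp⟩, by simpa using ht0.ne'⟩
    rwa [norm_real, Real.norm_eq_abs, abs_neg, abs_of_pos ht0]
  have hle := abs_re_mul_le_norm_sub_mul_cpow_neg_half (A := A) (neg_neg_of_pos ht0)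
    (hNeu (-t) (neg_lt_neg htδ) (neg_neg_of_pos ht0))
  rw [abs_neg, abs_of_pos ht0] at hle
  exact hle.trans (hbound _ hmem)

/-- Reality of the leading coefficient: the zero Neumann condition on the
negative real axis forces the pole coefficient to be purely imaginary. -/
theorem leading_coefficient_purely_imaginary
    (δ : ℝ) (hδ : 0 < δ) (f : ℂ → ℂ)
    (S : Set ℂ) (hS : S = {z : ℂ | ‖z‖ < δ ∧ 0 ≤ z.im} \ {0})
    (hfc : ContinuousOn f S)
    (A : ℂ) (M : ℝ) (hM : 0 ≤ M)
    (hbound : ∀ z ∈ S, ‖f z - A * z ^ (-(1 : ℂ)/2)‖ ≤ M)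
    (hNeu : ∀ x : ℝ, -δ < x → x < 0 → (f (x : ℂ)).im = 0) :
    A.re = 0 :=
  leading_coefficient_purely_imaginary_general δ hδ f S hS A M hbound hNeu
end
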